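/- Every perfect matching of G_I induces a feasible room assignment of the RMP instance with the same total score, and conversely every feasible assignment induces a perfect matching of G_I of the same weight. -/

import Mathlib

open Finset

/-- Capacity of the rooms: rooms `0,…,R1-1` are single rooms, rooms `R1,…,R1+R2-1`
are double rooms. -/
def roomCap (R1 R2 : ℕ) (r : Fin (R1 + R2)) : ℕ := if (r : ℕ) < R1 then 1 else 2

/-- A feasible room assignment: capacities are respected and rooms are sex-homogeneous. -/
def FeasibleAssign {P : Type*} [Fintype P] [DecidableEq P] (female : P → Bool)
    (R1 R2 : ℕ) (f : P → Fin (R1 + R2)) : Prop :=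
  (∀ r, (univ.filter fun p => f p = r).card ≤ roomCap R1 R2 r) ∧
    ∀ p q, f p = f q → female p = female q

/-- Total patient-fit score of an assignment: sum of `w` over the room occupancy sets. -/
def assignScore {P : Type*} [Fintype P] [DecidableEq P] (w : Finset P → ℕ)
    (R1 R2 : ℕ) (f : P → Fin (R1 + R2)) : ℕ :=
  ∑ r : Fin (R1 + R2), w (univ.filter fun p => f p = r)

/-- The graph `G_I` on patients plus `k` auxiliary vertices: edges join two patients of
the same sex, any patient with any auxiliary vertex, and two auxiliary vertices of
`X₂` (indices `≥ a`). -/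
def GIp {P : Type*} (female : P → Bool) (k a : ℕ) : SimpleGraph (P ⊕ Fin k) :=
  SimpleGraph.fromRel fun u v =>
    match u, v with
    | Sum.inl p, Sum.inl q => female p = female q
    | Sum.inl _, Sum.inr _ => True
    | Sum.inr x, Sum.inr y => a ≤ x.val ∧ a ≤ y.val
    | _, _ => False

/-- The set of patient endpoints of an edge of `G_I`. -/
def patientsOf {P : Type*} [Fintype P] [DecidableEq P] {k : ℕ}
    (e : Sym2 (P ⊕ Fin k)) : Finset P :=
  univ.filter fun p => Sum.inl p ∈ e

/-- The weight of a matching: the sum of edge weights, where an edge between patients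
`u,v` costs `w {u,v}`, a patient–auxiliary edge costs `w {p}` and an edge between two
auxiliary vertices costs `w ∅ = 0`. -/
noncomputable def matchWeight {P : Type*} [Fintype P] [DecidableEq P] {k : ℕ}
    (w : Finset P → ℕ) (female : P → Bool) (a : ℕ)
    (m : (GIp female k a).Subgraph) : ℕ :=
  ∑ᶠ e ∈ m.edgeSet, w (patientsOf e)


section Aux
variable {P : Type*} [Fintype P] [DecidableEq P] {k : ℕ}
set_option linter.unusedSectionVars false

noncomputable def keyV : (P ⊕ Fin k) → ℕ :=
  Sum.elim (fun p => ((Fintype.equivFin P) p : ℕ)) (fun x => Fintype.card P + x)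

lemma keyV_inj : Function.Injective (keyV (P := P) (k := k)) := by
  rintro (p | x) (q | y) h <;> simp [keyV] at h
  · exact congrArg _ ((Fintype.equivFin P).injective (Fin.ext h))
  · exact absurd h (by have := ((Fintype.equivFin P) p).2; omega)
  · exact absurd h (by have := ((Fintype.equivFin P) q).2; omega)
  · exact congrArg _ (Fin.ext h)

lemma keyV_inl_lt_inr (p : P) (x : Fin k) : keyV (k := k) (Sum.inl p) < keyV (Sum.inr x : P ⊕ Fin k) := by
  have := ((Fintype.equivFin P) p).2
  simp [keyV]; omega

lemma patientsOf_inl_inl (p q : P) :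
    patientsOf (k := k) s(Sum.inl p, Sum.inl q) = {p, q} := by
  ext r; simp [patientsOf]

lemma patientsOf_inl_inr (p : P) (x : Fin k) :
    patientsOf s(Sum.inl p, Sum.inr x) = {p} := by
  ext r; simp [patientsOf]

lemma patientsOf_inr_inr (x y : Fin k) :
    patientsOf (P := P) s(Sum.inr x, Sum.inr y) = ∅ := by
  ext r; simp [patientsOf]

end Aux

section Matching
variable {V : Type*} {G : SimpleGraph V}
open SimpleGraph

def matchingOfInv (G : SimpleGraph V) (σ : V → V) (hinv : ∀ v, σ (σ v) = v)
    (hadj : ∀ v, G.Adj v (σ v)) : G.Subgraph where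
  verts := Set.univ
  Adj u v := σ u = v
  adj_sub := by rintro u v rfl; exact hadj u
  edge_vert := by intros; trivial
  symm := ⟨by rintro u v rfl; exact hinv u⟩

lemma matchingOfInv_adj (σ : V → V) (hinv : ∀ v, σ (σ v) = v)
    (hadj : ∀ v, G.Adj v (σ v)) (u v : V) :
    (matchingOfInv G σ hinv hadj).Adj u v ↔ σ u = v := Iff.rfl

lemma matchingOfInv_isPerfectMatching (σ : V → V) (hinv : ∀ v, σ (σ v) = v)
    (hadj : ∀ v, G.Adj v (σ v)) :
    (matchingOfInv G σ hinv hadj).IsPerfectMatching := by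
  rw [SimpleGraph.Subgraph.isPerfectMatching_iff]
  intro v
  exact ⟨σ v, rfl, fun w h => (show σ v = w from h).symm⟩

lemma exists_inv_of_isPerfectMatching (m : G.Subgraph) (hm : m.IsPerfectMatching) :
    ∃ σ : V → V, (∀ v, σ (σ v) = v) ∧ (∀ u v, m.Adj u v ↔ σ u = v) := by
  rw [SimpleGraph.Subgraph.isPerfectMatching_iff] at hm
  choose σ h1 h2 using hm
  refine ⟨σ, fun v => (h2 (σ v) v (h1 v).symm).symm, fun u v => ⟨fun h => (h2 u v h).symm, ?_⟩⟩
  rintro rfl; exact h1 u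

end Matching

section MW
set_option linter.unusedSectionVars false
set_option maxHeartbeats 1000000
variable {P : Type*} [Fintype P] [DecidableEq P] {k : ℕ} (female : P → Bool) (a : ℕ)

noncomputable def Ssig (σ : (P ⊕ Fin k) → (P ⊕ Fin k)) : Finset P :=
  univ.filter fun p => (σ (Sum.inl p)).isRight

noncomputable def Tsig (σ : (P ⊕ Fin k) → (P ⊕ Fin k)) : Finset P :=
  univ.filter fun p => (σ (Sum.inl p)).isLeft ∧ keyV (k := k) (Sum.inl p) < keyV (σ (Sum.inl p))

def piP (σ : (P ⊕ Fin k) → (P ⊕ Fin k)) (p : P) : P :=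
  (σ (Sum.inl p)).elim id fun _ => p

lemma piP_spec (σ : (P ⊕ Fin k) → (P ⊕ Fin k)) (p : P) (h : (σ (Sum.inl p)).isLeft) :
    σ (Sum.inl p) = Sum.inl (piP σ p) := by
  rcases hσ : σ (Sum.inl p) with q | x
  · simp [piP, hσ]
  · rw [hσ] at h; simp at h

lemma mw_formula (w : Finset P → ℕ) (hw : w ∅ = 0)
    (σ : (P ⊕ Fin k) → (P ⊕ Fin k)) (hinv : ∀ v, σ (σ v) = v) (hne : ∀ v, σ v ≠ v)
    (m : (GIp female k a).Subgraph) (hAdj : ∀ u v, m.Adj u v ↔ σ u = v) :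
    matchWeight w female a m
      = (∑ p ∈ Tsig σ, w {p, piP σ p}) + ∑ p ∈ Ssig σ, w {p} := by
  classical
  set Rep : Finset (P ⊕ Fin k) := univ.filter fun v => keyV v < keyV (σ v) with hRep
  have hkey_ne : ∀ v : P ⊕ Fin k, keyV v ≠ keyV (σ v) := fun v h => hne v (keyV_inj h).symm
  have hedge : m.edgeSet = ↑(Rep.image fun v => s(v, σ v)) := by
    ext e
    induction e using Sym2.ind with
    | _ u v =>
      simp only [SimpleGraph.Subgraph.mem_edgeSet, hAdj, Finset.coe_image, Set.mem_image,
        Finset.mem_coe, hRep, Finset.mem_filter, Finset.mem_univ, true_and]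
      constructor
      · rintro rfl
        rcases lt_or_gt_of_ne (hkey_ne u) with h | h
        · exact ⟨u, h, rfl⟩
        · refine ⟨σ u, ?_, ?_⟩
          · rw [hinv]; exact h
          · rw [hinv, Sym2.eq_swap]
      · rintro ⟨x, hx, he⟩
        rw [Sym2.eq_iff] at he
        rcases he with ⟨rfl, rfl⟩ | ⟨rfl, rfl⟩
        · rfl
        · exact hinv _
  rw [matchWeight, hedge, finsum_mem_coe_finset]
  rw [Finset.sum_image]
  · have hsplit : Rep = ((Tsig σ).image Sum.inl ∪ (Ssig σ).image Sum.inl)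
        ∪ Rep.filter (fun v => v.isRight) := by
      ext u
      cases u with
      | inl p =>
        constructor
        · intro h
          rw [hRep, Finset.mem_filter] at h
          rcases hσ : σ (Sum.inl p) with q | x
          · refine Finset.mem_union_left _ (Finset.mem_union_left _ ?_)
            refine Finset.mem_image.2 ⟨p, ?_, rfl⟩
            simp only [Tsig, Finset.mem_filter, Finset.mem_univ, true_and, hσ,
              Sum.isLeft_inl, true_and]
            exact hσ ▸ h.2
          · refine Finset.mem_union_left _ (Finset.mem_union_right _ ?_)
            exact Finset.mem_image.2 ⟨p, by simp [Ssig, hσ], rfl⟩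
        · intro h
          rw [hRep, Finset.mem_filter]
          refine ⟨Finset.mem_univ _, ?_⟩
          rcases Finset.mem_union.1 h with h | h
          · rcases Finset.mem_union.1 h with h | h
            · obtain ⟨q, hq, he⟩ := Finset.mem_image.1 h
              rw [← he]
              simp only [Tsig, Finset.mem_filter] at hq
              exact hq.2.2
            · obtain ⟨q, hq, he⟩ := Finset.mem_image.1 h
              rw [← he]
              simp only [Ssig, Finset.mem_filter, Finset.mem_univ, true_and] at hq
              rcases hσ : σ (Sum.inl q) with q' | x
              · rw [hσ] at hq; simp at hq
              · exact keyV_inl_lt_inr q x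
          · have := (Finset.mem_filter.1 h).2
            simp at this
      | inr x =>
        constructor
        · intro h
          exact Finset.mem_union_right _ (Finset.mem_filter.2 ⟨h, rfl⟩)
        · intro h
          rcases Finset.mem_union.1 h with h | h
          · rcases Finset.mem_union.1 h with h | h <;>
              · obtain ⟨q, -, he⟩ := Finset.mem_image.1 h
                exact absurd he (by simp)
          · exact (Finset.mem_filter.1 h).1
    rw [hsplit, Finset.sum_union, Finset.sum_union]
    · have haux : ∑ v ∈ Rep.filter (fun v => v.isRight), w (patientsOf s(v, σ v)) = 0 := by
        apply Finset.sum_eq_zero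
        intro v hv
        rw [Finset.mem_filter, hRep, Finset.mem_filter] at hv
        obtain ⟨⟨-, hlt⟩, hr⟩ := hv
        rcases v with p | x
        · simp at hr
        · rcases hσ : σ (Sum.inr x) with q | y
          · rw [hσ] at hlt
            exact absurd hlt (not_lt.2 (le_of_lt (keyV_inl_lt_inr q x)))
          · rw [patientsOf_inr_inr, hw]
      rw [haux, add_zero, Finset.sum_image (by simp), Finset.sum_image (by simp)]
      congr 1
      · apply Finset.sum_congr rfl
        intro p hp
        simp only [Tsig, Finset.mem_filter] at hp
        rw [piP_spec σ p hp.2.1, patientsOf_inl_inl]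
      · apply Finset.sum_congr rfl
        intro p hp
        simp only [Ssig, Finset.mem_filter, Finset.mem_univ, true_and] at hp
        rcases hσ : σ (Sum.inl p) with q | y
        · rw [hσ] at hp; simp at hp
        · rw [patientsOf_inl_inr]
    · rw [Finset.disjoint_left]
      intro v hv hv'
      obtain ⟨p, hp, rfl⟩ := Finset.mem_image.1 hv
      obtain ⟨q, hq, he⟩ := Finset.mem_image.1 hv'
      rw [← he] at hv'
      simp only [Tsig, Ssig, Finset.mem_filter, Finset.mem_univ, true_and] at hp hq
      have he2 := Sum.inl_injective he
      rcases hσ : σ (Sum.inl p) with q' | y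
      · rw [he2, hσ] at hq; simp at hq
      · rw [hσ] at hp; simp at hp
    · rw [Finset.disjoint_right]
      intro v hv hmem
      simp only [Finset.mem_filter] at hv
      rcases Finset.mem_union.1 hmem with h | h <;>
        · obtain ⟨q, -, he⟩ := Finset.mem_image.1 h
          rw [← he] at hv; simp at hv
  · intro x hx y hy he
    simp only [hRep, Finset.mem_coe, Finset.mem_filter, Finset.mem_univ, true_and] at hx hy
    rw [Sym2.eq_iff] at he
    rcases he with ⟨h1, -⟩ | ⟨h1, h2⟩
    · exact h1
    · exfalso
      subst h1
      rw [hinv] at hx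
      exact lt_asymm hx hy
end MW

section Helpers
set_option linter.unusedSectionVars false

lemma card_doubles (R1 R2 : ℕ) :
    ((univ : Finset (Fin (R1 + R2))).filter fun r : Fin (R1 + R2) => ¬ r.1 < R1).card = R2 := by
  have himg : (univ : Finset (Fin R2)).image
      (fun i : Fin R2 => (⟨R1 + i.1, by omega⟩ : Fin (R1 + R2)))
      = (univ : Finset (Fin (R1 + R2))).filter fun r : Fin (R1 + R2) => ¬ r.1 < R1 := by
    ext r
    simp only [Finset.mem_image, Finset.mem_univ, true_and, Finset.mem_filter, not_lt]
    constructor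
    · rintro ⟨i, rfl⟩; simp
    · intro h
      refine ⟨⟨r.1 - R1, by omega⟩, ?_⟩
      apply Fin.ext; simp; omega
  rw [← himg, Finset.card_image_of_injective _ ?_, Finset.card_univ, Fintype.card_fin]
  intro i j h
  have h2 : R1 + i.1 = R1 + j.1 := congrArg Fin.val h
  exact Fin.ext (by omega)

lemma sum_roomCap (R1 R2 : ℕ) : ∑ r : Fin (R1 + R2), roomCap R1 R2 r = R1 + 2 * R2 := by
  have h1 : ∀ r : Fin (R1 + R2), roomCap R1 R2 r = 1 + (if (r : ℕ) < R1 then 0 else 1) := by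
    intro r; unfold roomCap; split <;> rfl
  simp_rw [h1]
  rw [Finset.sum_add_distrib, Finset.sum_const, Finset.card_univ, Fintype.card_fin,
    Finset.sum_ite, Finset.sum_const, Finset.sum_const, smul_eq_mul, smul_eq_mul,
    mul_zero, mul_one, zero_add, smul_eq_mul, mul_one, card_doubles]
  omega

lemma feasible_card_le {P : Type*} [Fintype P] [DecidableEq P] {female : P → Bool}
    {R1 R2 : ℕ} {f : P → Fin (R1 + R2)} (hf : FeasibleAssign female R1 R2 f) :
    Fintype.card P ≤ R1 + 2 * R2 := by
  rw [← Finset.card_univ,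
    Finset.card_eq_sum_card_fiberwise (f := f) (t := univ) (fun x _ => Finset.mem_univ _),
    ← sum_roomCap R1 R2]
  exact Finset.sum_le_sum fun r _ => hf.1 r

section GIpAdj
variable {P : Type*} (female : P → Bool) (k a : ℕ)

lemma GIp_adj_inl_inl (p q : P) :
    (GIp female k a).Adj (Sum.inl p) (Sum.inl q) ↔ p ≠ q ∧ female p = female q := by
  simp only [GIp, SimpleGraph.fromRel_adj]
  constructor
  · rintro ⟨hne, h | h⟩
    · exact ⟨fun he => hne (by rw [he]), h⟩
    · exact ⟨fun he => hne (by rw [he]), h.symm⟩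
  · rintro ⟨hne, h⟩
    exact ⟨fun he => hne (Sum.inl_injective he), Or.inl h⟩

lemma GIp_adj_inl_inr (p : P) (x : Fin k) :
    (GIp female k a).Adj (Sum.inl p) (Sum.inr x) := by
  simp only [GIp, SimpleGraph.fromRel_adj]
  exact ⟨by simp, Or.inl trivial⟩

lemma GIp_adj_inr_inr (x y : Fin k) :
    (GIp female k a).Adj (Sum.inr x) (Sum.inr y) ↔ x ≠ y ∧ (a ≤ x.1 ∧ a ≤ y.1) := by
  simp only [GIp, SimpleGraph.fromRel_adj]
  constructor
  · rintro ⟨hne, h | h⟩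
    · exact ⟨fun he => hne (by rw [he]), h⟩
    · exact ⟨fun he => hne (by rw [he]), h.2, h.1⟩
  · rintro ⟨hne, h⟩
    exact ⟨fun he => hne (Sum.inr_injective he), Or.inl h⟩

end GIpAdj
end Helpers

section Dir1
set_option linter.unusedSectionVars false
set_option maxHeartbeats 2000000

lemma dir1 {P : Type*} [Fintype P] [DecidableEq P] (female : P → Bool)
    (R1 R2 k a : ℕ) (w : Finset P → ℕ) (hR2 : 1 ≤ R2) (hwempty : w ∅ = 0)
    (hk : k = 2 * (R1 + R2) - Fintype.card P)
    (ha : a = Fintype.card P - 2 * R2)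
    (hn : Fintype.card P ≤ R1 + 2 * R2)
    (m : (GIp female k a).Subgraph) (hm : m.IsPerfectMatching) :
    ∃ f : P → Fin (R1 + R2), FeasibleAssign female R1 R2 f ∧
      assignScore w R1 R2 f = matchWeight w female a m := by
  classical
  obtain ⟨σ, hinv, hAdj⟩ := exists_inv_of_isPerfectMatching m hm
  have hne : ∀ v, σ v ≠ v := fun v h => ((hAdj v v).mpr h).ne rfl
  have hG : ∀ v, (GIp female k a).Adj v (σ v) := fun v => ((hAdj v (σ v)).mpr rfl).adj_sub
  have hσinj : Function.Injective σ := fun u v h => by rw [← hinv u, h, hinv]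
  set n := Fintype.card P with hnn
  have hmemS : ∀ p : P, p ∈ Ssig (k := k) σ ↔ (σ (Sum.inl p)).isRight := by
    intro p; simp [Ssig]
  have hmemT : ∀ p : P, p ∈ Tsig σ ↔ (σ (Sum.inl p)).isLeft ∧
      keyV (k := k) (Sum.inl p) < keyV (σ (Sum.inl p)) := by
    intro p; simp [Tsig]
  have hnotS : ∀ p : P, p ∉ Ssig (k := k) σ → σ (Sum.inl p) = Sum.inl (piP σ p) := by
    intro p hp
    apply piP_spec
    rcases hσp : σ (Sum.inl p) with q | x
    · simp
    · exact absurd ((hmemS p).2 (by rw [hσp]; rfl)) hp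
  have hpiP : ∀ p : P, p ∉ Ssig (k := k) σ → piP σ p ∉ Ssig σ ∧ piP σ (piP σ p) = p ∧
      piP σ p ≠ p ∧ female (piP σ p) = female p := by
    intro p hp
    have h1 := hnotS p hp
    have h2 : σ (Sum.inl (piP σ p)) = Sum.inl p := by rw [← h1, hinv]
    have h3 : piP σ p ∉ Ssig σ := by rw [hmemS, h2]; simp
    have h4 : piP σ (piP σ p) = p := by
      have h5 := piP_spec σ (piP σ p) (by rw [h2]; rfl)
      rw [h2] at h5
      exact (Sum.inl_injective h5).symm
    have h5 : piP σ p ≠ p := fun he => hne (Sum.inl p) (by rw [h1, he])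
    have h6 : female (piP σ p) = female p := by
      have h7 := hG (Sum.inl p)
      rw [h1] at h7
      exact ((GIp_adj_inl_inl female k a p (piP σ p)).1 h7).2.symm
    exact ⟨h3, h4, h5, h6⟩
  set ldr : P → P := fun p =>
    if keyV (k := k) (Sum.inl p) < keyV (σ (Sum.inl p)) then p else piP σ p with hldrdef
  have hkey_ne : ∀ v : P ⊕ Fin k, keyV v ≠ keyV (σ v) := fun v h => hne v (keyV_inj h).symm
  have hT_notS : ∀ ℓ ∈ Tsig σ, ℓ ∉ Ssig (k := k) σ := by
    intro ℓ hℓ hS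
    have h1 := ((hmemT ℓ).1 hℓ).1
    have h2 := (hmemS ℓ).1 hS
    rcases σ (Sum.inl ℓ) with q | x <;> simp_all
  have hldr_mem : ∀ p ∉ Ssig (k := k) σ, ldr p ∈ Tsig σ := by
    intro p hp
    have h1 := hnotS p hp
    rw [hldrdef]
    simp only []
    by_cases hc : keyV (k := k) (Sum.inl p) < keyV (σ (Sum.inl p))
    · rw [if_pos hc, hmemT]
      exact ⟨by rw [h1]; rfl, hc⟩
    · rw [if_neg hc, hmemT]
      have h2 : σ (Sum.inl (piP σ p)) = Sum.inl p := by rw [← h1, hinv]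
      refine ⟨by rw [h2]; rfl, ?_⟩
      rw [h2, ← h1]
      exact lt_of_le_of_ne (not_lt.1 hc) (Ne.symm (hkey_ne (Sum.inl p)))
  have hldr_self : ∀ ℓ ∈ Tsig σ, ldr ℓ = ℓ := by
    intro ℓ hℓ
    rw [hldrdef]
    simp only []
    rw [if_pos ((hmemT ℓ).1 hℓ).2]
  have hldr_pi : ∀ ℓ ∈ Tsig σ, ldr (piP σ ℓ) = ℓ := by
    intro ℓ hℓ
    have hℓS := hT_notS ℓ hℓ
    have h1 := hnotS ℓ hℓS
    have h2 : σ (Sum.inl (piP σ ℓ)) = Sum.inl ℓ := by rw [← h1, hinv]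
    have h3 := (hpiP ℓ hℓS).2.1
    rw [hldrdef]
    simp only []
    rw [if_neg, h3]
    rw [h2, ← h1]
    exact not_lt.2 (le_of_lt ((hmemT ℓ).1 hℓ).2)
  have hldr_eq : ∀ p ∉ Ssig (k := k) σ, p = ldr p ∨ p = piP σ (ldr p) := by
    intro p hp
    rw [hldrdef]
    simp only []
    by_cases hc : keyV (k := k) (Sum.inl p) < keyV (σ (Sum.inl p))
    · rw [if_pos hc]; exact Or.inl rfl
    · rw [if_neg hc]; exact Or.inr ((hpiP p hp).2.1).symm
  -- counting
  set F2 : Finset P := univ.filter fun p => (σ (Sum.inl p)).isLeft ∧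
      keyV (σ (Sum.inl p)) < keyV (k := k) (Sum.inl p) with hF2
  have hF2_notS : ∀ p ∈ F2, p ∉ Ssig (k := k) σ := by
    intro p hp hS
    rw [hF2, Finset.mem_filter] at hp
    have h2 := (hmemS p).1 hS
    rcases σ (Sum.inl p) with q | x <;> simp_all
  have hcardF : F2.card = (Tsig σ).card := by
    apply Finset.card_bij (i := fun p _ => piP σ p)
    · intro p hp
      have hpS := hF2_notS p hp
      have h1 := hnotS p hpS
      have h2 : σ (Sum.inl (piP σ p)) = Sum.inl p := by rw [← h1, hinv]
      rw [hF2, Finset.mem_filter] at hp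
      rw [hmemT, h2, ← h1]
      exact ⟨rfl, hp.2.2⟩
    · intro p hp q hq he
      have h1 := (hpiP p (hF2_notS p hp)).2.1
      have h2 := (hpiP q (hF2_notS q hq)).2.1
      rw [← h1, he, h2]
    · intro ℓ hℓ
      have hℓS := hT_notS ℓ hℓ
      refine ⟨piP σ ℓ, ?_, (hpiP ℓ hℓS).2.1⟩
      have h1 := hnotS ℓ hℓS
      have h2 : σ (Sum.inl (piP σ ℓ)) = Sum.inl ℓ := by rw [← h1, hinv]
      rw [hF2, Finset.mem_filter]
      refine ⟨Finset.mem_univ _, by rw [h2]; rfl, ?_⟩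
      rw [h2, ← h1]
      exact ((hmemT ℓ).1 hℓ).2
  have hd12 : Disjoint (Tsig σ) F2 := by
    rw [Finset.disjoint_left]
    intro p hp hp'
    rw [hF2, Finset.mem_filter] at hp'
    exact absurd (((hmemT p).1 hp).2) (not_lt.2 (le_of_lt hp'.2.2))
  have hd3 : Disjoint (Tsig σ ∪ F2) (Ssig σ) := by
    rw [Finset.disjoint_left]
    intro p hp hp'
    rcases Finset.mem_union.1 hp with h | h
    · exact hT_notS p h hp'
    · exact hF2_notS p h hp'
  have hcover : (Tsig σ) ∪ F2 ∪ Ssig σ = univ := by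
    apply Finset.eq_univ_of_forall
    intro p
    by_cases hp : p ∈ Ssig (k := k) σ
    · exact Finset.mem_union_right _ hp
    · apply Finset.mem_union_left
      have h1 := hnotS p hp
      rcases lt_or_gt_of_ne (hkey_ne (Sum.inl p)) with h | h
      · exact Finset.mem_union_left _ ((hmemT p).2 ⟨by rw [h1]; rfl, h⟩)
      · refine Finset.mem_union_right _ ?_
        rw [hF2, Finset.mem_filter]
        exact ⟨Finset.mem_univ _, by rw [h1]; rfl, h⟩
  have hcount : 2 * (Tsig σ).card + (Ssig (k := k) σ).card = n := by
    have h1 := congrArg Finset.card hcover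
    rw [Finset.card_union_of_disjoint hd3, Finset.card_union_of_disjoint hd12,
      Finset.card_univ] at h1
    omega
  have hsk : (Ssig (k := k) σ).card ≤ k := by
    rcases Finset.eq_empty_or_nonempty (Ssig (k := k) σ) with hS0 | ⟨p0, hp0⟩
    · simp [hS0]
    · have hx0 := (hmemS p0).1 hp0
      obtain ⟨x0, hx0'⟩ : ∃ x0, σ (Sum.inl p0) = Sum.inr x0 := by
        rcases hσ : σ (Sum.inl p0) with q | x
        · rw [hσ] at hx0; simp at hx0
        · exact ⟨x, rfl⟩
      set g : P → Fin k := fun p => (σ (Sum.inl p)).elim (fun _ => x0) id with hgdef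
      have hg : ∀ p ∈ Ssig (k := k) σ, σ (Sum.inl p) = Sum.inr (g p) := by
        intro p hp
        have h1 := (hmemS p).1 hp
        rcases hσ : σ (Sum.inl p) with q | x
        · rw [hσ] at h1; simp at h1
        · simp [hgdef, hσ]
      calc (Ssig (k := k) σ).card
          ≤ (univ : Finset (Fin k)).card := by
            apply Finset.card_le_card_of_injOn g (fun _ _ => Finset.mem_univ _)
            intro p hp q hq he
            have := hg p (Finset.mem_coe.1 hp)
            rw [he, ← hg q (Finset.mem_coe.1 hq)] at this
            exact Sum.inl_injective (hσinj this)
        _ = k := by rw [Finset.card_univ, Fintype.card_fin]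
  have has : a ≤ (Ssig (k := k) σ).card := by
    by_cases ha0 : a = 0
    · omega
    · have hPpos : 0 < n := by omega
      obtain ⟨p0⟩ : Nonempty P := Fintype.card_pos_iff.1 (by omega)
      have hak : a ≤ k := by omega
      set pOf : Fin k → P := fun x => (σ (Sum.inr x)).elim id (fun _ => p0) with hpOfdef
      have hpOf : ∀ x : Fin k, x.1 < a → σ (Sum.inr x) = Sum.inl (pOf x) := by
        intro x hx
        rcases hσ : σ (Sum.inr x) with p | y
        · simp [hpOfdef, hσ]
        · exfalso
          have h1 := hG (Sum.inr x)
          rw [hσ] at h1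
          have h2 := ((GIp_adj_inr_inr female k a x y).1 h1).2.1
          omega
      have hle : (univ : Finset (Fin a)).card ≤ (Ssig (k := k) σ).card := by
        apply Finset.card_le_card_of_injOn
          (fun i => pOf ⟨i.1, lt_of_lt_of_le i.2 hak⟩)
        · intro i _
          have h1 := hpOf ⟨i.1, lt_of_lt_of_le i.2 hak⟩ i.2
          simp only [Finset.mem_coe]
          rw [hmemS, ← h1, hinv]
          rfl
        · intro i hi j hj he
          have h1 := hpOf ⟨i.1, lt_of_lt_of_le i.2 hak⟩ i.2
          have h2 := hpOf ⟨j.1, lt_of_lt_of_le j.2 hak⟩ j.2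
          simp only [] at he
          rw [he] at h1
          rw [← h2] at h1
          have := hσinj h1
          have := Sum.inr_injective this
          exact Fin.ext (by simpa [Fin.ext_iff] using this)
      rwa [Finset.card_univ, Fintype.card_fin] at hle
  have hT2R2 : (Tsig σ).card ≤ R2 := by omega
  have hTS : (Tsig σ).card + (Ssig (k := k) σ).card ≤ R1 + R2 := by omega
  -- injections into rooms
  set doubles : Finset (Fin (R1 + R2)) := univ.filter fun r : Fin (R1 + R2) => ¬ r.1 < R1
    with hdoubles
  have hdc : doubles.card = R2 := card_doubles R1 R2
  have hj0 : R1 < R1 + R2 := by omega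
  set j0 : Fin (R1 + R2) := ⟨R1, hj0⟩ with hj0def
  obtain ⟨eΦ⟩ : Nonempty (↥(Tsig σ) ↪ ↥doubles) := by
    apply Function.Embedding.nonempty_of_card_le
    rw [Fintype.card_coe, Fintype.card_coe, hdc]
    exact hT2R2
  set φ : P → Fin (R1 + R2) := fun p =>
    if h : p ∈ Tsig σ then (eΦ ⟨p, h⟩ : {x // x ∈ doubles}).1 else j0 with hφdef
  have hφmem : ∀ ℓ ∈ Tsig σ, φ ℓ ∈ doubles := by
    intro ℓ hℓ
    rw [hφdef]
    simp only [dif_pos hℓ]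
    exact (eΦ ⟨ℓ, hℓ⟩).2
  have hφinj : ∀ ℓ₁ ∈ Tsig σ, ∀ ℓ₂ ∈ Tsig σ, φ ℓ₁ = φ ℓ₂ → ℓ₁ = ℓ₂ := by
    intro ℓ₁ h₁ ℓ₂ h₂ he
    rw [hφdef] at he
    simp only [dif_pos h₁, dif_pos h₂] at he
    have := eΦ.injective (Subtype.ext he)
    exact congrArg Subtype.val this
  set imgΦ : Finset (Fin (R1 + R2)) := (Tsig σ).image φ with himgΦ
  have hcardimgΦ : imgΦ.card = (Tsig σ).card := Finset.card_image_of_injOn hφinj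
  set rest : Finset (Fin (R1 + R2)) := univ \ imgΦ with hrest
  have hrestcard : rest.card = (R1 + R2) - (Tsig σ).card := by
    rw [hrest, Finset.card_sdiff_of_subset (Finset.subset_univ _), Finset.card_univ, Fintype.card_fin,
      hcardimgΦ]
  obtain ⟨eΨ⟩ : Nonempty (↥(Ssig (k := k) σ) ↪ ↥rest) := by
    apply Function.Embedding.nonempty_of_card_le
    rw [Fintype.card_coe, Fintype.card_coe, hrestcard]
    omega
  set ψ : P → Fin (R1 + R2) := fun p =>
    if h : p ∈ Ssig (k := k) σ then (eΨ ⟨p, h⟩ : {x // x ∈ rest}).1 else j0 with hψdef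
  have hψmem : ∀ p ∈ Ssig (k := k) σ, ψ p ∈ rest := by
    intro p hp
    rw [hψdef]
    simp only [dif_pos hp]
    exact (eΨ ⟨p, hp⟩).2
  have hψinj : ∀ p₁ ∈ Ssig (k := k) σ, ∀ p₂ ∈ Ssig (k := k) σ, ψ p₁ = ψ p₂ → p₁ = p₂ := by
    intro p₁ h₁ p₂ h₂ he
    rw [hψdef] at he
    simp only [dif_pos h₁, dif_pos h₂] at he
    have := eΨ.injective (Subtype.ext he)
    exact congrArg Subtype.val this
  set f : P → Fin (R1 + R2) := fun p => if p ∈ Ssig (k := k) σ then ψ p else φ (ldr p)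
    with hfdef
  have hfS : ∀ p ∈ Ssig (k := k) σ, f p = ψ p := by
    intro p hp; rw [hfdef]; simp only [if_pos hp]
  have hfT : ∀ p ∉ Ssig (k := k) σ, f p = φ (ldr p) := by
    intro p hp; rw [hfdef]; simp only [if_neg hp]
  have hψnotΦ : ∀ p ∈ Ssig (k := k) σ, ψ p ∉ imgΦ := by
    intro p hp
    have := hψmem p hp
    rw [hrest, Finset.mem_sdiff] at this
    exact this.2
  have hfibφ : ∀ ℓ ∈ Tsig σ, (univ.filter fun p => f p = φ ℓ) = {ℓ, piP σ ℓ} := by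
    intro ℓ hℓ
    have hℓS := hT_notS ℓ hℓ
    ext p
    simp only [Finset.mem_filter, Finset.mem_univ, true_and, Finset.mem_insert,
      Finset.mem_singleton]
    constructor
    · intro hfp
      by_cases hp : p ∈ Ssig (k := k) σ
      · exfalso
        rw [hfS p hp] at hfp
        exact hψnotΦ p hp (hfp ▸ Finset.mem_image_of_mem φ hℓ)
      · rw [hfT p hp] at hfp
        have h1 := hφinj _ (hldr_mem p hp) _ hℓ hfp
        rcases hldr_eq p hp with h2 | h2
        · left; rw [h2, h1]
        · right; rw [h2, h1]
    · rintro (rfl | rfl)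
      · rw [hfT p hℓS, hldr_self p hℓ]
      · rw [hfT _ (hpiP ℓ hℓS).1, hldr_pi ℓ hℓ]
  have hfibψ : ∀ p ∈ Ssig (k := k) σ, (univ.filter fun q => f q = ψ p) = {p} := by
    intro p hp
    ext q
    simp only [Finset.mem_filter, Finset.mem_univ, true_and, Finset.mem_singleton]
    constructor
    · intro hfq
      by_cases hq : q ∈ Ssig (k := k) σ
      · exact hψinj q hq p hp (by rw [← hfS q hq, hfq])
      · exfalso
        rw [hfT q hq] at hfq
        exact hψnotΦ p hp (hfq ▸ Finset.mem_image_of_mem φ (hldr_mem q hq))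
    · rintro rfl
      exact hfS q hp
  set imgΨ : Finset (Fin (R1 + R2)) := (Ssig (k := k) σ).image ψ with himgΨ
  have hfib0 : ∀ r : Fin (R1 + R2), r ∉ imgΦ → r ∉ imgΨ →
      (univ.filter fun p => f p = r) = ∅ := by
    intro r h1 h2
    rw [Finset.filter_eq_empty_iff]
    intro p _
    by_cases hp : p ∈ Ssig (k := k) σ
    · rw [hfS p hp]
      intro he
      exact h2 (he ▸ Finset.mem_image_of_mem ψ hp)
    · rw [hfT p hp]
      intro he
      exact h1 (he ▸ Finset.mem_image_of_mem φ (hldr_mem p hp))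
  have hfeas : FeasibleAssign female R1 R2 f := by
    constructor
    · intro r
      by_cases h1 : r ∈ imgΦ
      · obtain ⟨ℓ, hℓ, rfl⟩ := Finset.mem_image.1 h1
        rw [hfibφ ℓ hℓ]
        have hcap : roomCap R1 R2 (φ ℓ) = 2 := by
          have := hφmem ℓ hℓ
          rw [hdoubles, Finset.mem_filter] at this
          unfold roomCap
          rw [if_neg this.2]
        rw [hcap]
        exact (Finset.card_insert_le _ _).trans (by simp)
      · by_cases h2 : r ∈ imgΨ
        · obtain ⟨p, hp, rfl⟩ := Finset.mem_image.1 h2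
          rw [hfibψ p hp, Finset.card_singleton]
          unfold roomCap
          split <;> omega
        · rw [hfib0 r h1 h2]
          simp
    · intro p q hpq
      by_cases hp : p ∈ Ssig (k := k) σ
      · by_cases hq : q ∈ Ssig (k := k) σ
        · rw [hψinj p hp q hq (by rw [← hfS p hp, ← hfS q hq, hpq])]
        · exfalso
          rw [hfS p hp, hfT q hq] at hpq
          exact hψnotΦ p hp (hpq ▸ Finset.mem_image_of_mem φ (hldr_mem q hq))
      · by_cases hq : q ∈ Ssig (k := k) σ
        · exfalso
          rw [hfT p hp, hfS q hq] at hpq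
          exact hψnotΦ q hq (hpq.symm ▸ Finset.mem_image_of_mem φ (hldr_mem p hp))
        · rw [hfT p hp, hfT q hq] at hpq
          have hℓ := hφinj _ (hldr_mem p hp) _ (hldr_mem q hq) hpq
          have hfem : ∀ x, x ∉ Ssig (k := k) σ → female x = female (ldr x) := by
            intro x hx
            rcases hldr_eq x hx with h | h
            · rw [← h]
            · conv_lhs => rw [h]
              exact (hpiP (ldr x) (hT_notS _ (hldr_mem x hx))).2.2.2
          rw [hfem p hp, hfem q hq, hℓ]
  refine ⟨f, hfeas, ?_⟩
  rw [mw_formula female a w hwempty σ hinv hne m hAdj]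
  rw [assignScore]
  have hdisjΦΨ : Disjoint imgΦ imgΨ := by
    rw [Finset.disjoint_right]
    intro r hr
    obtain ⟨p, hp, rfl⟩ := Finset.mem_image.1 hr
    exact hψnotΦ p hp
  have huniv : (univ : Finset (Fin (R1 + R2)))
      = (imgΦ ∪ imgΨ) ∪ (univ \ (imgΦ ∪ imgΨ)) :=
    (Finset.union_sdiff_of_subset (Finset.subset_univ _)).symm
  rw [huniv, Finset.sum_union Finset.disjoint_sdiff, Finset.sum_union hdisjΦΨ]
  have hs1 : ∑ r ∈ imgΦ, w (univ.filter fun p => f p = r)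
      = ∑ ℓ ∈ Tsig σ, w {ℓ, piP σ ℓ} := by
    rw [himgΦ, Finset.sum_image (fun x hx y hy => hφinj x hx y hy)]
    exact Finset.sum_congr rfl fun ℓ hℓ => by rw [hfibφ ℓ hℓ]
  have hs2 : ∑ r ∈ imgΨ, w (univ.filter fun p => f p = r)
      = ∑ p ∈ Ssig (k := k) σ, w {p} := by
    rw [himgΨ, Finset.sum_image (fun x hx y hy => hψinj x hx y hy)]
    exact Finset.sum_congr rfl fun p hp => by rw [hfibψ p hp]
  have hs3 : ∑ r ∈ univ \ (imgΦ ∪ imgΨ), w (univ.filter fun p => f p = r) = 0 := by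
    apply Finset.sum_eq_zero
    intro r hr
    rw [Finset.mem_sdiff, Finset.mem_union] at hr
    rw [hfib0 r (fun h => hr.2 (Or.inl h)) (fun h => hr.2 (Or.inr h)), hwempty]
  rw [hs1, hs2, hs3, add_zero]
end Dir1

section Dir2
set_option linter.unusedSectionVars false
set_option maxHeartbeats 2000000

lemma dir2 {P : Type*} [Fintype P] [DecidableEq P] (female : P → Bool)
    (R1 R2 k a : ℕ) (w : Finset P → ℕ) (hR2 : 1 ≤ R2) (hwempty : w ∅ = 0)
    (hk : k = 2 * (R1 + R2) - Fintype.card P)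
    (ha : a = Fintype.card P - 2 * R2)
    (f : P → Fin (R1 + R2)) (hf : FeasibleAssign female R1 R2 f) :
    ∃ m : (GIp female k a).Subgraph, m.IsPerfectMatching ∧
      matchWeight w female a m = assignScore w R1 R2 f := by
  classical
  set n := Fintype.card P with hnn
  have hn : n ≤ R1 + 2 * R2 := feasible_card_le hf
  set fib : Fin (R1 + R2) → Finset P := fun r => univ.filter fun p => f p = r with hfibdef
  have hcap2 : ∀ r, (fib r).card ≤ 2 :=
    fun r => le_trans (hf.1 r) (by unfold roomCap; split <;> omega)
  have hmemfib : ∀ p, p ∈ fib (f p) := by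
    intro p; rw [hfibdef]; simp
  have hpos : ∀ p, 1 ≤ (fib (f p)).card :=
    fun p => Finset.card_pos.2 ⟨p, hmemfib p⟩
  have hfibmem : ∀ p r, p ∈ fib r → f p = r := by
    intro p r hp; rw [hfibdef] at hp; exact (Finset.mem_filter.1 hp).2
  set Sf : Finset P := univ.filter fun p => (fib (f p)).card = 1 with hSf
  have hmemSf : ∀ p, p ∈ Sf ↔ (fib (f p)).card = 1 := by intro p; simp [hSf]
  have hc2 : ∀ p, p ∉ Sf → (fib (f p)).card = 2 := by
    intro p hp
    rw [hmemSf] at hp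
    have := hcap2 (f p); have := hpos p
    omega
  set ρ : P → P := fun p =>
    if h : ((fib (f p)).erase p).Nonempty then h.choose else p with hρdef
  have hρmem : ∀ p, p ∉ Sf → ρ p ∈ (fib (f p)).erase p := by
    intro p hp
    have hne : ((fib (f p)).erase p).Nonempty := by
      rw [← Finset.card_pos, Finset.card_erase_of_mem (hmemfib p), hc2 p hp]
      omega
    rw [hρdef]
    simp only [dif_pos hne]
    exact hne.choose_spec
  have hρ : ∀ p, p ∉ Sf → ρ p ≠ p ∧ f (ρ p) = f p ∧ ρ p ∉ Sf ∧ ρ (ρ p) = p ∧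
      female (ρ p) = female p := by
    intro p hp
    have h1 := hρmem p hp
    rw [Finset.mem_erase] at h1
    have h2 : f (ρ p) = f p := hfibmem _ _ h1.2
    have h3 : ρ p ∉ Sf := by
      rw [hmemSf, h2, hc2 p hp]; omega
    have h4 : ρ (ρ p) = p := by
      have h5 := hρmem (ρ p) h3
      rw [Finset.mem_erase, h2] at h5
      have h6 : (fib (f p)).erase (ρ p) ⊆ {p} := by
        intro q hq
        rw [Finset.mem_erase] at hq
        by_contra hqp
        rw [Finset.mem_singleton] at hqp
        have hsub : ({ρ p, q, p} : Finset P) ⊆ fib (f p) := by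
          intro z hz
          rcases Finset.mem_insert.1 hz with rfl | hz
          · exact h1.2
          rcases Finset.mem_insert.1 hz with rfl | hz
          · exact hq.2
          · rw [Finset.mem_singleton] at hz; rw [hz]; exact hmemfib p
        have hq1 : q ∉ ({p} : Finset P) := by simp [hqp]
        have hq2 : ρ p ∉ insert q ({p} : Finset P) := by
          simp only [Finset.mem_insert, Finset.mem_singleton]
          push_neg
          exact ⟨Ne.symm hq.1, h1.1⟩
        have hcard3 : ({ρ p, q, p} : Finset P).card = 3 := by
          rw [Finset.card_insert_of_notMem hq2, Finset.card_insert_of_notMem hq1,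
            Finset.card_singleton]
        have := Finset.card_le_card hsub
        rw [hcard3, hc2 p hp] at this
        omega
      have h8 := h6 (Finset.mem_erase.2 ⟨h5.1, h5.2⟩)
      rw [Finset.mem_singleton] at h8
      exact h8
    exact ⟨h1.1, h2, h3, h4, hf.2 _ _ h2⟩
  have hfib2 : ∀ p, p ∉ Sf → fib (f p) = {p, ρ p} := by
    intro p hp
    have h1 := hρ p hp
    refine (Finset.eq_of_subset_of_card_le ?_ ?_).symm
    · intro q hq
      rcases Finset.mem_insert.1 hq with rfl | hq
      · exact hmemfib _
      · rw [Finset.mem_singleton] at hq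
        rw [hq, ← h1.2.1]
        exact hmemfib _
    · rw [hc2 p hp, Finset.card_pair (Ne.symm h1.1)]
  have hfib1 : ∀ p, p ∈ Sf → fib (f p) = {p} := by
    intro p hp
    rw [hmemSf] at hp
    obtain ⟨q, hq⟩ := Finset.card_eq_one.1 hp
    have := hmemfib p
    rw [hq, Finset.mem_singleton] at this
    rw [hq, this]
  -- counting
  set Dr : Finset (Fin (R1 + R2)) := univ.filter fun r => (fib r).card = 2 with hDr
  set Sr : Finset (Fin (R1 + R2)) := univ.filter fun r => (fib r).card = 1 with hSr
  set Zr : Finset (Fin (R1 + R2)) := univ.filter fun r => (fib r).card = 0 with hZr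
  have hdisjDS : Disjoint Dr Sr := by
    rw [Finset.disjoint_left]
    intro r h1 h2
    rw [hDr, Finset.mem_filter] at h1
    rw [hSr, Finset.mem_filter] at h2
    omega
  have hdisjDSZ : Disjoint (Dr ∪ Sr) Zr := by
    rw [Finset.disjoint_left]
    intro r h1 h2
    rw [hZr, Finset.mem_filter] at h2
    rcases Finset.mem_union.1 h1 with h | h
    · rw [hDr, Finset.mem_filter] at h; omega
    · rw [hSr, Finset.mem_filter] at h; omega
  have hcover : Dr ∪ Sr ∪ Zr = univ := by
    apply Finset.eq_univ_of_forall
    intro r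
    have := hcap2 r
    rcases Nat.lt_or_ge (fib r).card 1 with h | h
    · exact Finset.mem_union_right _ (by rw [hZr, Finset.mem_filter]; exact ⟨Finset.mem_univ _, by omega⟩)
    · rcases Nat.lt_or_ge (fib r).card 2 with h2 | h2
      · exact Finset.mem_union_left _ (Finset.mem_union_right _
          (by rw [hSr, Finset.mem_filter]; exact ⟨Finset.mem_univ _, by omega⟩))
      · exact Finset.mem_union_left _ (Finset.mem_union_left _
          (by rw [hDr, Finset.mem_filter]; exact ⟨Finset.mem_univ _, by omega⟩))
  have hsumfib : ∑ r : Fin (R1 + R2), (fib r).card = n := by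
    rw [hnn, ← Finset.card_univ,
      Finset.card_eq_sum_card_fiberwise (f := f) (t := univ) (fun x _ => Finset.mem_univ _)]
  have hsum_split : 2 * Dr.card + Sr.card = n := by
    rw [← hsumfib, ← hcover, Finset.sum_union hdisjDSZ, Finset.sum_union hdisjDS]
    have e1 : ∑ r ∈ Dr, (fib r).card = 2 * Dr.card := by
      rw [Finset.sum_congr rfl (fun r hr => (Finset.mem_filter.1 hr).2), Finset.sum_const]
      simp only [← hDr, smul_eq_mul]
      ring
    have e2 : ∑ r ∈ Sr, (fib r).card = Sr.card := by
      rw [Finset.sum_congr rfl (fun r hr => (Finset.mem_filter.1 hr).2), Finset.sum_const]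
      simp only [← hSr, smul_eq_mul]
      ring
    have e3 : ∑ r ∈ Zr, (fib r).card = 0 := by
      apply Finset.sum_eq_zero
      intro r hr
      exact (Finset.mem_filter.1 hr).2
    rw [e1, e2, e3]
    omega
  have hSfSr : Sf.card = Sr.card := by
    apply Finset.card_bij (i := fun p _ => f p)
    · intro p hp
      rw [hSr, Finset.mem_filter]
      exact ⟨Finset.mem_univ _, (hmemSf p).1 hp⟩
    · intro p hp q hq he
      have := hmemfib q
      rw [← he, hfib1 p hp, Finset.mem_singleton] at this
      exact this.symm
    · intro r hr
      rw [hSr, Finset.mem_filter] at hr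
      obtain ⟨p, hp⟩ := Finset.card_eq_one.1 hr.2
      have hpf : f p = r := hfibmem p r (by rw [hp]; exact Finset.mem_singleton_self p)
      refine ⟨p, ?_, hpf⟩
      exact (hmemSf p).2 (by simp only [hpf, hp, Finset.card_singleton])
  have hDrR2 : Dr.card ≤ R2 := by
    have hsub : Dr ⊆ univ.filter fun r : Fin (R1 + R2) => ¬ r.1 < R1 := by
      intro r hr
      rw [hDr, Finset.mem_filter] at hr
      rw [Finset.mem_filter]
      refine ⟨Finset.mem_univ _, ?_⟩
      intro hlt
      have : (fib r).card ≤ roomCap R1 R2 r := hf.1 r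
      unfold roomCap at this
      rw [if_pos hlt] at this
      omega
    calc Dr.card ≤ _ := Finset.card_le_card hsub
      _ = R2 := card_doubles R1 R2
  have hDrSr : Dr.card + Sr.card ≤ R1 + R2 := by
    rw [← Finset.card_union_of_disjoint hdisjDS]
    calc (Dr ∪ Sr).card ≤ (univ : Finset (Fin (R1 + R2))).card := Finset.card_le_card (Finset.subset_univ _)
      _ = R1 + R2 := by rw [Finset.card_univ, Fintype.card_fin]
  set sf := Sf.card with hsf
  have has : a ≤ sf := by omega
  have hsk : sf ≤ k := by omega
  have hkeven : (k - sf) % 2 = 0 := by omega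
  -- construct the involution
  have hcardSf : Fintype.card ↥Sf = sf := by rw [Fintype.card_coe]
  set e : ↥Sf ≃ Fin sf := Fintype.equivFinOfCardEq hcardSf with hedef
  set σ : (P ⊕ Fin k) → (P ⊕ Fin k) := fun v => Sum.elim
    (fun p => if h : p ∈ Sf then Sum.inr ⟨(e ⟨p, h⟩).1, lt_of_lt_of_le (e ⟨p, h⟩).2 hsk⟩
      else Sum.inl (ρ p))
    (fun x : Fin k => if h : x.1 < sf then Sum.inl (e.symm ⟨x.1, h⟩ : ↥Sf).1
      else if h2 : (x.1 - sf) % 2 = 0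
        then Sum.inr ⟨x.1 + 1, by have := x.2; omega⟩
        else Sum.inr ⟨x.1 - 1, by have := x.2; omega⟩) v with hσdef
  have hσinlS : ∀ p (h : p ∈ Sf),
      σ (Sum.inl p) = Sum.inr ⟨(e ⟨p, h⟩).1, lt_of_lt_of_le (e ⟨p, h⟩).2 hsk⟩ := by
    intro p h
    rw [hσdef]
    simp only [Sum.elim_inl, dif_pos h]
  have hσinlN : ∀ p, p ∉ Sf → σ (Sum.inl p) = Sum.inl (ρ p) := by
    intro p h
    rw [hσdef]
    simp only [Sum.elim_inl, dif_neg h]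
  have hσinrS : ∀ (x : Fin k) (h : x.1 < sf),
      σ (Sum.inr x) = Sum.inl (e.symm ⟨x.1, h⟩ : ↥Sf).1 := by
    intro x h
    rw [hσdef]
    simp only [Sum.elim_inr, dif_pos h]
  have hσinrE : ∀ (x : Fin k), ¬ x.1 < sf → (x.1 - sf) % 2 = 0 →
      ∃ y : Fin k, σ (Sum.inr x) = Sum.inr y ∧ y.1 = x.1 + 1 := by
    intro x h h2
    refine ⟨⟨x.1 + 1, by have := x.2; omega⟩, ?_, rfl⟩
    rw [hσdef]
    simp only [Sum.elim_inr, dif_neg h, dif_pos h2]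
  have hσinrO : ∀ (x : Fin k), ¬ x.1 < sf → ¬ (x.1 - sf) % 2 = 0 →
      ∃ y : Fin k, σ (Sum.inr x) = Sum.inr y ∧ y.1 = x.1 - 1 := by
    intro x h h2
    refine ⟨⟨x.1 - 1, by have := x.2; omega⟩, ?_, rfl⟩
    rw [hσdef]
    simp only [Sum.elim_inr, dif_neg h, dif_neg h2]
  have hinv : ∀ v, σ (σ v) = v := by
    rintro (p | x)
    · by_cases hp : p ∈ Sf
      · rw [hσinlS p hp, hσinrS _ (e ⟨p, hp⟩).2]
        congr 1
        have : (⟨((e ⟨p, hp⟩).1 : ℕ), (e ⟨p, hp⟩).2⟩ : Fin sf) = e ⟨p, hp⟩ := Fin.ext rfl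
        rw [this, Equiv.symm_apply_apply]
      · rw [hσinlN p hp, hσinlN _ (hρ p hp).2.2.1, (hρ p hp).2.2.2.1]
    · by_cases hx : x.1 < sf
      · rw [hσinrS x hx]
        set q : ↥Sf := e.symm ⟨x.1, hx⟩ with hq
        rw [hσinlS q.1 q.2]
        have h1 : (⟨(q.1 : P), q.2⟩ : ↥Sf) = q := Subtype.ext rfl
        rw [h1, hq, Equiv.apply_symm_apply]
      · by_cases h2 : (x.1 - sf) % 2 = 0
        · obtain ⟨y, hy, hyv⟩ := hσinrE x hx h2
          rw [hy]
          obtain ⟨z, hz, hzv⟩ := hσinrO y (by omega) (by omega)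
          rw [hz]
          exact congrArg Sum.inr (Fin.ext (by omega))
        · obtain ⟨y, hy, hyv⟩ := hσinrO x hx h2
          rw [hy]
          obtain ⟨z, hz, hzv⟩ := hσinrE y (by omega) (by omega)
          rw [hz]
          exact congrArg Sum.inr (Fin.ext (by omega))
  have hne : ∀ v, σ v ≠ v := by
    rintro (p | x)
    · by_cases hp : p ∈ Sf
      · rw [hσinlS p hp]; simp
      · rw [hσinlN p hp]
        intro h
        exact (hρ p hp).1 (Sum.inl_injective h)
    · by_cases hx : x.1 < sf
      · rw [hσinrS x hx]; simp
      · by_cases h2 : (x.1 - sf) % 2 = 0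
        · obtain ⟨y, hy, hyv⟩ := hσinrE x hx h2
          rw [hy]
          intro h
          have := congrArg Fin.val (Sum.inr_injective h)
          omega
        · obtain ⟨y, hy, hyv⟩ := hσinrO x hx h2
          rw [hy]
          intro h
          have := congrArg Fin.val (Sum.inr_injective h)
          omega
  have hGadj : ∀ v, (GIp female k a).Adj v (σ v) := by
    rintro (p | x)
    · by_cases hp : p ∈ Sf
      · rw [hσinlS p hp]
        exact GIp_adj_inl_inr female k a p _
      · rw [hσinlN p hp]
        exact (GIp_adj_inl_inl female k a p (ρ p)).2
          ⟨Ne.symm (hρ p hp).1, ((hρ p hp).2.2.2.2).symm⟩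
    · by_cases hx : x.1 < sf
      · rw [hσinrS x hx]
        exact (GIp_adj_inl_inr female k a _ x).symm
      · by_cases h2 : (x.1 - sf) % 2 = 0
        · obtain ⟨y, hy, hyv⟩ := hσinrE x hx h2
          rw [hy]
          exact (GIp_adj_inr_inr female k a x y).2
            ⟨fun he => by have := congrArg Fin.val he; omega, by omega, by omega⟩
        · obtain ⟨y, hy, hyv⟩ := hσinrO x hx h2
          rw [hy]
          exact (GIp_adj_inr_inr female k a x y).2
            ⟨fun he => by have := congrArg Fin.val he; omega, by omega, by omega⟩
  refine ⟨matchingOfInv (GIp female k a) σ hinv hGadj,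
    matchingOfInv_isPerfectMatching σ hinv hGadj, ?_⟩
  rw [mw_formula female a w hwempty σ hinv hne _ (fun u v => Iff.rfl)]
  -- identify Ssig and Tsig
  have hSsig : Ssig (k := k) σ = Sf := by
    ext p
    simp only [Ssig, Finset.mem_filter, Finset.mem_univ, true_and]
    by_cases hp : p ∈ Sf
    · rw [hσinlS p hp]; simpa using hp
    · rw [hσinlN p hp]; simpa using hp
  have hpiρ : ∀ p, p ∉ Sf → piP σ p = ρ p := by
    intro p hp
    rw [piP, hσinlN p hp]
    rfl
  have hTsig : ∀ p, p ∈ Tsig σ ↔ p ∉ Sf ∧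
      keyV (k := k) (Sum.inl p) < keyV (Sum.inl (ρ p) : P ⊕ Fin k) := by
    intro p
    simp only [Tsig, Finset.mem_filter, Finset.mem_univ, true_and]
    by_cases hp : p ∈ Sf
    · rw [hσinlS p hp]
      simp [hp]
    · rw [hσinlN p hp]
      simp [hp]
  -- compute assignScore
  rw [assignScore]
  have huniv2 : ∑ r : Fin (R1 + R2), w (univ.filter fun p => f p = r)
      = ∑ r ∈ Dr, w (fib r) + ∑ r ∈ Sr, w (fib r) + ∑ r ∈ Zr, w (fib r) := by
    rw [← hcover, Finset.sum_union hdisjDSZ, Finset.sum_union hdisjDS]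
  rw [huniv2]
  have hz : ∑ r ∈ Zr, w (fib r) = 0 := by
    apply Finset.sum_eq_zero
    intro r hr
    rw [hZr, Finset.mem_filter] at hr
    rw [Finset.card_eq_zero.1 hr.2, hwempty]
  have hs : ∑ r ∈ Sr, w (fib r) = ∑ p ∈ Ssig (k := k) σ, w {p} := by
    rw [hSsig]
    symm
    apply Finset.sum_bij (i := fun p _ => f p)
    · intro p hp
      rw [hSr, Finset.mem_filter]
      exact ⟨Finset.mem_univ _, (hmemSf p).1 hp⟩
    · intro p hp q hq he
      have := hmemfib q
      rw [← he, hfib1 p hp, Finset.mem_singleton] at this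
      exact this.symm
    · intro r hr
      rw [hSr, Finset.mem_filter] at hr
      obtain ⟨p, hp⟩ := Finset.card_eq_one.1 hr.2
      have hpf : f p = r := hfibmem p r (by rw [hp]; exact Finset.mem_singleton_self p)
      refine ⟨p, ?_, hpf⟩
      exact (hmemSf p).2 (by simp only [hpf, hp, Finset.card_singleton])
    · intro p hp
      rw [hfib1 p hp]
  have hd : ∑ r ∈ Dr, w (fib r) = ∑ ℓ ∈ Tsig σ, w {ℓ, piP σ ℓ} := by
    symm
    apply Finset.sum_bij (i := fun ℓ _ => f ℓ)
    · intro ℓ hℓ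
      rw [hDr, Finset.mem_filter]
      exact ⟨Finset.mem_univ _, hc2 ℓ ((hTsig ℓ).1 hℓ).1⟩
    · intro ℓ₁ h₁ ℓ₂ h₂ he
      obtain ⟨hn1, hk1⟩ := (hTsig ℓ₁).1 h₁
      obtain ⟨hn2, hk2⟩ := (hTsig ℓ₂).1 h₂
      have hmem2 := hmemfib ℓ₂
      rw [← he, hfib2 ℓ₁ hn1] at hmem2
      rcases Finset.mem_insert.1 hmem2 with h | h
      · exact h.symm
      · exfalso
        rw [Finset.mem_singleton] at h
        rw [h] at hk2
        rw [(hρ ℓ₁ hn1).2.2.2.1] at hk2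
        exact absurd hk1 (not_lt.2 (le_of_lt hk2))
    · intro r hr
      rw [hDr, Finset.mem_filter] at hr
      obtain ⟨x, y, hxy, hset⟩ := Finset.card_eq_two.1 hr.2
      have hxf : f x = r := hfibmem x r (by rw [hset]; simp)
      have hyf : f y = r := hfibmem y r (by rw [hset]; simp)
      have hxS : x ∉ Sf := by
        rw [hmemSf, hxf, hr.2]; omega
      have hρx : ρ x = y := by
        have := hρmem x hxS
        rw [hxf, hset, Finset.mem_erase] at this
        rcases Finset.mem_insert.1 this.2 with h | h
        · exact absurd h this.1
        · rwa [Finset.mem_singleton] at h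
      have hyS : y ∉ Sf := by
        rw [← hρx]
        exact (hρ x hxS).2.2.1
      have hρy : ρ y = x := by
        rw [← hρx]
        exact (hρ x hxS).2.2.2.1
      have hkxy : keyV (k := k) (Sum.inl x) ≠ keyV (Sum.inl y : P ⊕ Fin k) :=
        fun h => hxy (Sum.inl_injective (keyV_inj h))
      rcases lt_or_gt_of_ne hkxy with h | h
      · exact ⟨x, (hTsig x).2 ⟨hxS, by rwa [hρx]⟩, hxf⟩
      · exact ⟨y, (hTsig y).2 ⟨hyS, by rwa [hρy]⟩, hyf⟩
    · intro ℓ hℓ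
      obtain ⟨hn1, -⟩ := (hTsig ℓ).1 hℓ
      rw [hfib2 ℓ hn1, hpiρ ℓ hn1]
  rw [hz, add_zero, hs, hd]
end Dir2

/-- Every perfect matching of `G_I` induces a feasible room assignment of
the RMP instance with the same total score, and conversely every feasible assignment
induces a perfect matching of `G_I` of the same weight. -/
theorem stmt_6 {P : Type*} [Fintype P] [DecidableEq P] (female : P → Bool)
    (R1 R2 k a : ℕ) (w : Finset P → ℕ)
    (hR2 : 1 ≤ R2) (hwempty : w ∅ = 0)
    (hk : k = 2 * (R1 + R2) - Fintype.card P)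
    (ha : a = Fintype.card P - 2 * R2)
    (hfeas : ∃ f : P → Fin (R1 + R2), FeasibleAssign female R1 R2 f) :
    (∀ m : (GIp female k a).Subgraph, m.IsPerfectMatching →
      ∃ f : P → Fin (R1 + R2), FeasibleAssign female R1 R2 f ∧
        assignScore w R1 R2 f = matchWeight w female a m) ∧
    (∀ f : P → Fin (R1 + R2), FeasibleAssign female R1 R2 f →
      ∃ m : (GIp female k a).Subgraph, m.IsPerfectMatching ∧
        matchWeight w female a m = assignScore w R1 R2 f) := by
  obtain ⟨f0, hf0⟩ := hfeas
  have hn : Fintype.card P ≤ R1 + 2 * R2 := feasible_card_le hf0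
  constructor
  · intro m hm
    obtain ⟨f, h1, h2⟩ := dir1 female R1 R2 k a w hR2 hwempty hk ha hn m hm
    exact ⟨f, h1, h2⟩
  · intro f hf
    obtain ⟨m, h1, h2⟩ := dir2 female R1 R2 k a w hR2 hwempty hk ha f hf
    exact ⟨m, h1, h2⟩
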